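/- Let A, σ ∈ ℝ with A ≠ 0, let Q_t := σ²(e^{2At}−1)/(2A) for t ≥ 0, and define R_t[φ](x) := ∫_ℝ φ(e^{At}x + y) dN(0,Q_t)(y) for φ ∈ C_b(ℝ). Then there exists φ ∈ C_b(ℝ) such that for every T > 0 the map [0,T] → C_b(ℝ), t ↦ R_t[φ], is not strongly measurable (i.e., it is not the almost-everywhere limit of a sequence of finitely-valued functions [0,T] → C_b(ℝ)). -/

import Mathlib

open MeasureTheory Set
open scoped ENNReal

/-- `Q_t = σ²(e^{2At} − 1)/(2A)`. -/
noncomputable def ouQ (A σ t : ℝ) : ℝ := σ ^ 2 * (Real.exp (2 * A * t) - 1) / (2 * A)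

/-- The one-dimensional Ornstein–Uhlenbeck semigroup
`R_t[φ](x) = ∫_ℝ φ(e^{At} x + y) dN(0, Q_t)(y)`. -/
noncomputable def ouR (A σ : ℝ) (t : ℝ) (φ : ℝ → ℝ) (x : ℝ) : ℝ :=
  ∫ y, φ (Real.exp (A * t) * x + y) ∂(ProbabilityTheory.gaussianReal 0 (ouQ A σ t).toNNReal)

/-!
Take `φ = sin`. Averaging against a Gaussian gives `R_t sin x = exp (-Q_t / 2) * sin (e^{At} x)`.
For `t ≠ s` the frequencies `e^{At}`, `e^{As}` differ, and the amplitudes are bounded below on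
`[0, T]` since `Q` is monotone, so testing against `sin (e^{At} x)` over long intervals shows that
the orbit `t ↦ R_t sin` is uniformly separated in sup norm. Viewing functions in the uniform
e-metric space `ℝ →ᵤ ℝ`, each point of convergence `t` can be tagged injectively by a value of some
finitely-valued approximant close to `R_t sin`, so the set of points of convergence is countable,
hence null, contradicting its full measure in `[0, T]`.
-/

open Filter Topology Real ProbabilityTheory
open scoped UniformConvergence NNReal

theorem UniformFun.tendsto_ofFun_iff {ι α E : Type*} [SeminormedAddCommGroup E] {l : Filter ι}
    {f : ι → α → E} {g : α → E} :
    Tendsto (fun n => UniformFun.ofFun (f n)) l (𝓝 (UniformFun.ofFun g)) ↔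
      Tendsto (fun n => ⨆ x, (‖f n x - g x‖₊ : ℝ≥0∞)) l (𝓝 0) := by
  simp [tendsto_iff_edist_tendsto_0, UniformFun.edist_def, edist_eq_enorm_sub, enorm_eq_nnnorm]

theorem Set.countable_of_pairwise_lt_edist_of_tendsto {α E : Type*} [PseudoEMetricSpace E]
    {S : Set α} {u : α → E} {ε : ℝ≥0∞} (hε : 0 < ε)
    (hsep : S.Pairwise fun t s => ε < edist (u t) (u s)) {F : ℕ → α → E}
    (hF : ∀ n, (F n '' S).Countable) (hlim : ∀ t ∈ S, Tendsto (fun n => F n t) atTop (𝓝 (u t))) :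
    S.Countable := by
  have hclose : ∀ t ∈ S, ∃ n, edist (F n t) (u t) < ε / 2 := fun t ht =>
    ((tendsto_iff_edist_tendsto_0.mp (hlim t ht)).eventually
      (gt_mem_nhds (ENNReal.half_pos hε.ne'))).exists
  choose! N hN using hclose
  refine countable_of_injective_of_countable_image (f := fun t => F (N t) t) ?_
    ((countable_iUnion hF).mono ?_)
  · intro t ht s hs hts
    by_contra hne
    refine (hsep ht hs hne).not_ge ?_
    calc edist (u t) (u s) ≤ edist (F (N t) t) (u t) + edist (F (N s) s) (u s) := by
          rw [edist_comm (F (N t) t)]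
          simpa only [hts] using edist_triangle (u t) (F (N s) s) (u s)
      _ ≤ ε / 2 + ε / 2 := add_le_add (hN t ht).le (hN s hs).le
      _ = ε := ENNReal.add_halves ε
  · rintro _ ⟨t, ht, rfl⟩
    exact mem_iUnion.mpr ⟨N t, t, ht, rfl⟩

theorem abs_integral_cos_mul_le {c : ℝ} (hc : c ≠ 0) (L : ℝ) :
    |∫ x in (0 : ℝ)..L, cos (c * x)| ≤ |c|⁻¹ := by
  rw [intervalIntegral.integral_comp_mul_left cos hc, integral_cos, mul_zero, sin_zero, sub_zero,
    smul_eq_mul, abs_mul, abs_inv]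
  exact mul_le_of_le_one_right (by positivity) (abs_sin_le_one _)

theorem integral_sin_mul_sub_mul_sin (a b c₁ c₂ L : ℝ) :
    ∫ x in (0 : ℝ)..L, (c₁ * sin (a * x) - c₂ * sin (b * x)) * sin (a * x) =
      c₁ / 2 * L - c₁ / 2 * (∫ x in (0 : ℝ)..L, cos (2 * a * x))
        - c₂ / 2 * (∫ x in (0 : ℝ)..L, cos ((a - b) * x))
        + c₂ / 2 * (∫ x in (0 : ℝ)..L, cos ((a + b) * x)) := by
  have hint : ∀ c : ℝ, IntervalIntegrable (fun x => cos (c * x)) volume 0 L :=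
    fun c => (by fun_prop : Continuous fun x => cos (c * x)).intervalIntegrable _ _
  have hprod : ∀ x, (c₁ * sin (a * x) - c₂ * sin (b * x)) * sin (a * x) =
      c₁ / 2 - c₁ / 2 * cos (2 * a * x) - c₂ / 2 * cos ((a - b) * x)
        + c₂ / 2 * cos ((a + b) * x) := by
    intro x
    rw [mul_assoc, sub_mul a, add_mul a, cos_two_mul, cos_sub, cos_add, cos_sq']
    ring
  simp_rw [hprod]
  rw [intervalIntegral.integral_add (((intervalIntegrable_const).sub ((hint _).const_mul _)).sub
      ((hint _).const_mul _)) ((hint _).const_mul _),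
    intervalIntegral.integral_sub ((intervalIntegrable_const).sub ((hint _).const_mul _))
      ((hint _).const_mul _),
    intervalIntegral.integral_sub intervalIntegrable_const ((hint _).const_mul _)]
  simp only [intervalIntegral.integral_const, intervalIntegral.integral_const_mul, smul_eq_mul,
    sub_zero]
  ring

theorem abs_le_two_mul_of_forall_abs_sub_sin_le {a b c₁ c₂ M : ℝ} (ha : a ≠ 0) (hab : a - b ≠ 0)
    (hab' : a + b ≠ 0) (hM : ∀ x, |c₁ * sin (a * x) - c₂ * sin (b * x)| ≤ M) :
    |c₁| ≤ 2 * M := by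
  -- Averaging `f x * sin (a * x)` over `[0, L]` recovers `c₁ / 2` up to an error `C / L`.
  set C := |c₁| / 2 * |2 * a|⁻¹ + |c₂| / 2 * |a - b|⁻¹ + |c₂| / 2 * |a + b|⁻¹ with hC
  have key : ∀ L > 0, |c₁| / 2 ≤ M + C / L := by
    intro L hL
    have hupper := intervalIntegral.norm_integral_le_of_norm_le_const (a := 0) (b := L) (C := M)
      (f := fun x => (c₁ * sin (a * x) - c₂ * sin (b * x)) * sin (a * x)) fun x _ => by
        rw [norm_mul, Real.norm_eq_abs, Real.norm_eq_abs]
        exact (mul_le_of_le_one_right (abs_nonneg _) (abs_sin_le_one _)).trans (hM x)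
    rw [integral_sin_mul_sub_mul_sin, Real.norm_eq_abs, sub_zero, abs_of_pos hL] at hupper
    have e₁ : |c₁ / 2 * ∫ x in (0 : ℝ)..L, cos (2 * a * x)| ≤ |c₁| / 2 * |2 * a|⁻¹ := by
      rw [abs_mul, abs_div, abs_two]
      gcongr
      exact abs_integral_cos_mul_le (mul_ne_zero two_ne_zero ha) L
    have e₂ : |c₂ / 2 * ∫ x in (0 : ℝ)..L, cos ((a - b) * x)| ≤ |c₂| / 2 * |a - b|⁻¹ := by
      rw [abs_mul, abs_div, abs_two]
      gcongr
      exact abs_integral_cos_mul_le hab L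
    have e₃ : |c₂ / 2 * ∫ x in (0 : ℝ)..L, cos ((a + b) * x)| ≤ |c₂| / 2 * |a + b|⁻¹ := by
      rw [abs_mul, abs_div, abs_two]
      gcongr
      exact abs_integral_cos_mul_le hab' L
    rw [← sub_le_iff_le_add', le_div_iff₀ hL]
    have : |c₁| / 2 * L = |c₁ / 2 * L| := by rw [abs_mul, abs_div, abs_two, abs_of_pos hL]
    rw [sub_mul, this]
    cases abs_le.mp hupper; cases abs_le.mp e₁; cases abs_le.mp e₂; cases abs_le.mp e₃
    cases abs_cases (c₁ / 2 * L) <;> linarith [hC]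
  have hlim : Tendsto (fun L : ℝ => M + C / L) atTop (𝓝 M) := by
    simpa using tendsto_const_nhds.add
      (tendsto_const_nhds.div_atTop (tendsto_id (x := (atTop : Filter ℝ))))
  linarith [ge_of_tendsto hlim ((eventually_gt_atTop 0).mono key)]

theorem ofReal_abs_div_two_le_edist_sin {a b c₁ c₂ : ℝ} (ha : a ≠ 0) (hab : a - b ≠ 0)
    (hab' : a + b ≠ 0) :
    ENNReal.ofReal (|c₁| / 2) ≤ edist (UniformFun.ofFun fun x => c₁ * sin (a * x))
      (UniformFun.ofFun fun x => c₂ * sin (b * x)) := by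
  set d := edist (UniformFun.ofFun fun x => c₁ * sin (a * x))
    (UniformFun.ofFun fun x => c₂ * sin (b * x))
  rcases eq_top_or_lt_top d with hd | hd
  · simp [hd]
  have hM : ∀ x, |c₁ * sin (a * x) - c₂ * sin (b * x)| ≤ d.toReal := fun x => by
    rw [← Real.dist_eq, dist_edist]
    exact ENNReal.toReal_mono hd.ne (UniformFun.edist_le.mp le_rfl x)
  rw [ENNReal.ofReal_le_iff_le_toReal hd.ne]
  linarith [abs_le_two_mul_of_forall_abs_sub_sin_le ha hab hab' hM]

theorem integral_sin_add_gaussianReal (m : ℝ) (v : ℝ≥0) :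
    ∫ y, sin (m + y) ∂gaussianReal 0 v = exp (-v / 2) * sin m := by
  have hint : Integrable (fun y : ℝ => Complex.exp ((m + y : ℝ) * Complex.I)) (gaussianReal 0 v) :=
    (integrable_const (1 : ℝ)).mono' (by fun_prop)
      (.of_forall fun y => (Complex.norm_exp_ofReal_mul_I _).le)
  calc ∫ y, sin (m + y) ∂gaussianReal 0 v
      = (∫ y, Complex.exp ((m + y : ℝ) * Complex.I) ∂gaussianReal 0 v).im := by
        simpa only [RCLike.im_to_complex, Complex.exp_ofReal_mul_I_im] using integral_im hint
    _ = (Complex.exp (m * Complex.I) * charFun (gaussianReal 0 v) 1).im := by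
        simp only [charFun_apply_real, ← integral_const_mul, ← Complex.exp_add]
        push_cast
        simp only [one_mul, add_mul]
    _ = exp (-v / 2) * sin m := by
        rw [charFun_gaussianReal, ← Complex.exp_add,
          show (m : ℂ) * Complex.I + ((1 : ℝ) * (0 : ℝ) * Complex.I - v * (1 : ℝ) ^ 2 / 2) =
            ((-v / 2 : ℝ) : ℂ) + m * Complex.I by push_cast; ring,
          Complex.exp_add, ← Complex.ofReal_exp, Complex.im_ofReal_mul, Complex.exp_ofReal_mul_I_im]

theorem ouR_sin (A σ t : ℝ) :
    ouR A σ t sin = fun x => exp (-(ouQ A σ t).toNNReal / 2) * sin (exp (A * t) * x) :=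
  funext fun _ => integral_sin_add_gaussianReal _ _

theorem ouQ_mono {A : ℝ} (σ : ℝ) (hA : A ≠ 0) : Monotone (ouQ A σ) := by
  intro t s hts
  unfold ouQ
  rcases hA.lt_or_gt with hA | hA
  · refine (div_le_div_right_of_neg (by linarith)).mpr ?_
    exact mul_le_mul_of_nonneg_left (sub_le_sub_right (exp_le_exp.mpr (by nlinarith)) 1)
      (sq_nonneg σ)
  · refine (div_le_div_iff_of_pos_right (by linarith)).mpr ?_
    gcongr

/-- for `A ≠ 0` there exists a bounded continuous `φ : ℝ → ℝ` such that for
every `T > 0` the map `[0,T] → C_b(ℝ)`, `t ↦ R_t[φ]`, is not strongly measurable: it is not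
the a.e. pointwise (in sup norm) limit of a sequence of measurable functions taking finitely
many values in `C_b(ℝ)`. -/
theorem stmt11 (A σ : ℝ) (hA : A ≠ 0) :
    ∃ φ : ℝ → ℝ, Continuous φ ∧ (∃ M : ℝ, ∀ x, |φ x| ≤ M) ∧
      ∀ T : ℝ, 0 < T →
        ¬ ∃ F : ℕ → ℝ → ℝ → ℝ,
          (∀ n : ℕ, ((fun t => F n t) '' Icc (0 : ℝ) T).Finite) ∧
          (∀ n : ℕ, ∀ g : ℝ → ℝ, MeasurableSet {t : ℝ | t ∈ Icc (0 : ℝ) T ∧ F n t = g}) ∧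
          (∀ᵐ t ∂(volume.restrict (Icc (0 : ℝ) T)),
            Filter.Tendsto (fun n => ⨆ x : ℝ, (‖F n t x - ouR A σ t φ x‖₊ : ℝ≥0∞))
              Filter.atTop (nhds 0)) := by
  refine ⟨sin, continuous_sin, ⟨1, abs_sin_le_one⟩, fun T hT => ?_⟩
  rintro ⟨F, hfin, -, hae⟩
  set c : ℝ → ℝ := fun t => exp (-(ouQ A σ t).toNNReal / 2)
  have hc : ∀ t ≤ T, c T ≤ c t := fun t ht =>
    exp_le_exp.mpr <| div_le_div_of_nonneg_right (neg_le_neg <| by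
      exact_mod_cast Real.toNNReal_le_toNNReal (ouQ_mono σ hA ht)) two_pos.le
  set G := {t ∈ Icc 0 T | Tendsto (fun n => UniformFun.ofFun (F n t)) atTop
    (𝓝 (UniformFun.ofFun (ouR A σ t sin)))}
  have hsep : G.Pairwise fun t s => ENNReal.ofReal (c T / 4) <
      edist (UniformFun.ofFun (ouR A σ t sin)) (UniformFun.ofFun (ouR A σ s sin)) := by
    intro t ht s hs hts
    have hcT : 0 < c T := exp_pos _
    rw [ouR_sin, ouR_sin]
    calc ENNReal.ofReal (c T / 4) < ENNReal.ofReal (|c t| / 2) := by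
          rw [ENNReal.ofReal_lt_ofReal_iff (by positivity), abs_of_pos (exp_pos _)]
          linarith [hc t ht.1.2]
      _ ≤ _ := ofReal_abs_div_two_le_edist_sin (exp_ne_zero _)
          (sub_ne_zero.mpr fun h => hts (mul_left_cancel₀ hA (exp_injective h))) (by positivity)
  have hG : G.Countable := countable_of_pairwise_lt_edist_of_tendsto
    (ENNReal.ofReal_pos.mpr (by positivity)) hsep
    (fun n => (((hfin n).image UniformFun.ofFun).subset
      (by rw [← image_comp]; exact image_mono (sep_subset _ _))).countable)
    fun t ht => ht.2
  have hae_G : ∀ᵐ t ∂(volume.restrict (Icc (0 : ℝ) T)), t ∈ G :=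
    ((ae_restrict_mem measurableSet_Icc).and hae).mono fun t ht =>
      ⟨ht.1, UniformFun.tendsto_ofFun_iff.mpr ht.2⟩
  have hnull : volume (Icc (0 : ℝ) T) = 0 := ae_restrict_eq_bot.mp <|
    eventually_false_iff_eq_bot.mp <| (hae_G.and (hG.ae_notMem _)).mono fun t ht => ht.2 ht.1
  simp [Real.volume_Icc] at hnull
  linarith
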